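/- Let B = B(F) be a stationary generalized Bratteli diagram, A = F^T with positive eigenpair A ξ = λ ξ, and μ the associated tail-invariant measure with μ([ē]) = ξ_v/λ^n for paths ending at v at level n. Then μ is invariant under the left shift σ if and only if the row sums H^{(1)}_w = Σ_{u ∈ V_0} f_{w,u} equal λ for every vertex w. -/
import Mathlib


open MeasureTheory ENNReal Filter Topology

variable {V E : Type}

/-- Path space of a stationary generalized Bratteli diagram with edge set `E`,
source map `s` and range map `r`. -/
abbrev PathSp (s r : E → V) : Type _ := {x : ℕ → E // ∀ n, r (x n) = s (x (n + 1))}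

/-- The left shift (coding map) on the path space. -/
def shiftMap (s r : E → V) (x : PathSp s r) : PathSp s r :=
  ⟨fun n => x.1 (n + 1), fun n => x.2 (n + 1)⟩

/-- Prepending an edge `e` to a path `y` whose initial vertex is `r e` (the map `τ_e`). -/
def consPath (s r : E → V) (e : E) (y : PathSp s r) (h : r e = s (y.1 0)) : PathSp s r :=
  ⟨fun n => Nat.casesOn n e fun k => y.1 k, by
    intro n
    cases n with
    | zero => exact h
    | succ k => exact y.2 k⟩

/-- Compatibility of a finite sequence of edges: it forms a finite path. -/
def compat (s r : E → V) {n : ℕ} (f : Fin (n + 1) → E) : Prop :=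
  ∀ i : Fin n, r (f i.castSucc) = s (f i.succ)

/-- The cylinder set of the finite path `f`. -/
def cyl (s r : E → V) {n : ℕ} (f : Fin (n + 1) → E) : Set (PathSp s r) :=
  {x | ∀ i : Fin (n + 1), x.1 i.1 = f i}

section Aux

variable (s r : E → V)

lemma measurable_coord [MeasurableSpace E] (n : ℕ) :
    Measurable (fun x : PathSp s r => x.1 n) :=
  (measurable_pi_apply n).comp measurable_subtype_coe

lemma measurableSet_cylAux [MeasurableSpace E] [DiscreteMeasurableSpace E]
    {n : ℕ} (f : Fin (n + 1) → E) : MeasurableSet (cyl s r f) := by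
  have h : cyl s r f = ⋂ i : Fin (n + 1), (fun x : PathSp s r => x.1 i.1) ⁻¹' {f i} := by
    ext x; simp [cyl, Set.mem_iInter]
  rw [h]
  exact MeasurableSet.iInter fun i => (measurable_coord s r i.1) (measurableSet_singleton _)

lemma measurable_shiftMap [MeasurableSpace E] : Measurable (shiftMap s r) := by
  apply Measurable.subtype_mk
  exact measurable_pi_lambda _ fun n => measurable_coord s r (n + 1)

/-- The collection of (compatible) cylinder sets. -/
def cylSys : Set (Set (PathSp s r)) :=
  {S | ∃ (n : ℕ) (f : Fin (n + 1) → E), compat s r f ∧ S = cyl s r f}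

lemma cyl_inter_of_le {n m : ℕ} (f : Fin (n + 1) → E) (g : Fin (m + 1) → E) (h : n ≤ m)
    (hne : (cyl s r f ∩ cyl s r g).Nonempty) : cyl s r f ∩ cyl s r g = cyl s r g := by
  obtain ⟨x, hxf, hxg⟩ := hne
  ext y
  constructor
  · rintro ⟨_, hy⟩; exact hy
  · intro hy
    refine ⟨fun i => ?_, hy⟩
    have hi : (i : ℕ) < m + 1 := lt_of_lt_of_le i.2 (by omega)
    calc y.1 i.1 = g ⟨i.1, hi⟩ := hy ⟨i.1, hi⟩
      _ = x.1 i.1 := (hxg ⟨i.1, hi⟩).symm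
      _ = f i := hxf i

lemma isPiSystem_cylSys : IsPiSystem (cylSys s r) := by
  rintro S ⟨n, f, hf, rfl⟩ T ⟨m, g, hg, rfl⟩ hne
  rcases le_total n m with h | h
  · rw [cyl_inter_of_le s r f g h hne]
    exact ⟨m, g, hg, rfl⟩
  · rw [Set.inter_comm] at hne ⊢
    rw [cyl_inter_of_le s r g f h hne]
    exact ⟨n, f, hf, rfl⟩

lemma coord_preimage (i : ℕ) (e : E) :
    (fun x : PathSp s r => x.1 i) ⁻¹' {e} =
      ⋃ f : {f : Fin (i + 1) → E // compat s r f ∧ f (Fin.last i) = e}, cyl s r f.1 := by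
  ext x
  simp only [Set.mem_preimage, Set.mem_singleton_iff, Set.mem_iUnion]
  constructor
  · intro hx
    refine ⟨⟨fun j => x.1 j.1, fun j => x.2 j.1, hx⟩, fun j => rfl⟩
  · rintro ⟨⟨f, hf, hlast⟩, hx⟩
    exact (hx (Fin.last i)).trans hlast

lemma generate_cylSys [Countable E] [MeasurableSpace E] [DiscreteMeasurableSpace E] :
    (inferInstance : MeasurableSpace (PathSp s r)) =
      MeasurableSpace.generateFrom (cylSys s r) := by
  refine le_antisymm ?_ (MeasurableSpace.generateFrom_le ?_)
  · have h1 : (inferInstance : MeasurableSpace (PathSp s r)) =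
        MeasurableSpace.comap (fun x : PathSp s r => x.1) MeasurableSpace.pi := rfl
    rw [h1, MeasurableSpace.pi, MeasurableSpace.comap_iSup]
    refine iSup_le fun i => ?_
    rw [MeasurableSpace.comap_comp]
    refine Measurable.comap_le (@measurable_to_countable' E (PathSp s r) _ _
      (MeasurableSpace.generateFrom (cylSys s r)) _ (fun e => ?_))
    rw [show (Function.eval i ∘ (Subtype.val : PathSp s r → ℕ → E)) =
      (fun x : PathSp s r => x.1 i) from rfl, coord_preimage s r i e]
    exact MeasurableSet.iUnion fun f =>
      MeasurableSpace.measurableSet_generateFrom ⟨i, f.1, f.2.1, rfl⟩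
  · rintro S ⟨n, f, hf, rfl⟩
    exact measurableSet_cylAux s r f

lemma compat_cons {n : ℕ} (f : Fin (n + 1) → E) (hf : compat s r f) (e : E)
    (he : r e = s (f 0)) : compat s r (Fin.cons e f) := by
  intro j
  refine Fin.cases ?_ (fun k => ?_) j
  · simpa using he
  · have h1 : (k.succ).castSucc = (k.castSucc).succ := by
      ext; simp
    rw [h1, Fin.cons_succ, Fin.cons_succ]
    exact hf k

lemma cons_last {n : ℕ} (f : Fin (n + 1) → E) (e : E) :
    (Fin.cons e f : Fin (n + 2) → E) (Fin.last (n + 1)) = f (Fin.last n) := by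
  rw [← Fin.succ_last, Fin.cons_succ]

lemma preimage_cyl {n : ℕ} (f : Fin (n + 1) → E) :
    shiftMap s r ⁻¹' cyl s r f =
      ⋃ e ∈ {e : E | r e = s (f 0)}, cyl s r (Fin.cons e f) := by
  ext x
  simp only [Set.mem_preimage, Set.mem_iUnion, Set.mem_setOf_eq]
  constructor
  · intro hx
    have h0 : x.1 1 = f 0 := hx 0
    refine ⟨x.1 0, by rw [x.2 0, h0], fun i => ?_⟩
    refine Fin.cases ?_ (fun j => ?_) i
    · simp
    · rw [Fin.cons_succ]
      exact hx j
  · rintro ⟨e, he, hx⟩ i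
    have := hx i.succ
    rwa [Fin.cons_succ] at this

end Aux

/-- the tail-invariant measure `μ` (given by the positive eigenpair
`A ξ = λ ξ`, `μ([ē]) = ξ_v / λⁿ`) is invariant under the left shift `σ` if and only if
the row sums `H⁽¹⁾_w = Σ_u f_{w,u}` (the number of edges with range `w`) equal `λ`
for every vertex `w`. -/
theorem shift_invariant_iff_row_sums_eq
    [Countable E] [Countable V] [MeasurableSpace E] [DiscreteMeasurableSpace E]
    (s r : E → V) (xi : V → ℝ≥0∞) (lam : ℝ≥0∞)
    (hxi : ∀ v, 0 < xi v) (hxi' : ∀ v, xi v ≠ ∞)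
    (hlam : 0 < lam) (hlam' : lam ≠ ∞)
    (heig : ∀ w : V, ∑' e : {e : E // s e = w}, xi (r e.1) = lam * xi w)
    (hfin : ∀ w : V, {e : E | r e = w}.Finite)
    (μ : Measure (PathSp s r))
    (hμ0 : ∀ v : V, μ {x : PathSp s r | s (x.1 0) = v} = xi v)
    (hμ : ∀ (n : ℕ) (f : Fin (n + 1) → E), compat s r f →
        μ (cyl s r f) = xi (r (f (Fin.last n))) / lam ^ (n + 1)) :
    (∀ S : Set (PathSp s r), MeasurableSet S → μ (shiftMap s r ⁻¹' S) = μ S) ↔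
      ∀ w : V, ({e : E | r e = w}.ncard : ℝ≥0∞) = lam := by
  -- measure of a union of 1-cylinders over edges with range w
  have hdisj1 : ∀ w : V, ((hfin w).toFinset : Set E).PairwiseDisjoint
      (fun e => cyl s r (fun _ : Fin 1 => e)) := by
    intro w e _ e' _ hee'
    refine Set.disjoint_left.mpr fun x hx hx' => hee' ?_
    have h1 : x.1 0 = e := hx 0
    have h2 : x.1 0 = e' := hx' 0
    rw [← h1, ← h2]
  have hsingle : ∀ e : E, μ (cyl s r (fun _ : Fin 1 => e)) = xi (r e) / lam := by
    intro e
    have := hμ 0 (fun _ : Fin 1 => e) (fun i => i.elim0)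
    simpa using this
  have hunion1 : ∀ w : V,
      μ (⋃ e ∈ (hfin w).toFinset, cyl s r (fun _ : Fin 1 => e)) =
        ({e : E | r e = w}.ncard : ℝ≥0∞) * (xi w / lam) := by
    intro w
    rw [measure_biUnion_finset (hdisj1 w) (fun e _ => measurableSet_cylAux s r _)]
    have : ∀ e ∈ (hfin w).toFinset, μ (cyl s r (fun _ : Fin 1 => e)) = xi w / lam := by
      intro e he
      rw [hsingle e, (hfin w).mem_toFinset.mp he]
    rw [Finset.sum_congr rfl this, Finset.sum_const, nsmul_eq_mul,
      Set.ncard_eq_toFinset_card _ (hfin w)]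
  constructor
  · -- invariance implies row sums equal lam
    intro h w
    have hSmeas : MeasurableSet {x : PathSp s r | s (x.1 0) = w} :=
      (measurable_coord s r 0) (MeasurableSet.of_discrete (s := {e : E | s e = w}))
    have hdec : shiftMap s r ⁻¹' {x : PathSp s r | s (x.1 0) = w} =
        ⋃ e ∈ (hfin w).toFinset, cyl s r (fun _ : Fin 1 => e) := by
      ext x
      simp only [Set.mem_preimage, Set.mem_setOf_eq, Set.mem_iUnion,
        Set.Finite.mem_toFinset]
      constructor
      · intro hx
        refine ⟨x.1 0, by rw [x.2 0]; exact hx, fun i => ?_⟩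
        have h0 : i.1 = 0 := by omega
        rw [h0]
      · rintro ⟨e, he, hx⟩
        have h0 : x.1 0 = e := hx 0
        rw [show s ((shiftMap s r x).1 0) = s (x.1 1) from rfl, ← x.2 0, h0]
        exact he
    have heq := h _ hSmeas
    rw [hdec, hunion1 w, hμ0 w] at heq
    -- heq : N * (xi w / lam) = xi w
    set N : ℝ≥0∞ := ({e : E | r e = w}.ncard : ℝ≥0∞) with hN
    have h2 : xi w = N * xi w / lam := by
      rw [mul_div_assoc, heq]
    have h3 : lam * xi w = N * xi w :=
      (ENNReal.eq_div_iff hlam.ne' hlam').mp h2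
    rw [mul_comm lam (xi w), mul_comm N (xi w)] at h3
    exact ((ENNReal.mul_right_inj (hxi w).ne' (hxi' w)).mp h3).symm
  · -- row sums equal lam implies invariance
    intro hrow
    rcases isEmpty_or_nonempty E with hE | hE
    · intro S _
      haveI : IsEmpty (PathSp s r) := ⟨fun x => hE.false (x.1 0)⟩
      rw [Set.eq_empty_of_isEmpty S, Set.preimage_empty]
    · have hσ : Measurable (shiftMap s r) := measurable_shiftMap s r
      set ν := μ.map (shiftMap s r) with hν
      have key : ∀ S ∈ cylSys s r, ν S = μ S := by
        rintro S ⟨n, f, hf, rfl⟩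
        rw [hν, Measure.map_apply hσ (measurableSet_cylAux s r f), preimage_cyl s r f]
        set w := s (f 0)
        have hbu : (⋃ e ∈ {e : E | r e = w}, cyl s r (Fin.cons e f)) =
            ⋃ e ∈ (hfin w).toFinset, cyl s r (Fin.cons e f) := by
          simp [Set.Finite.mem_toFinset]
        rw [hbu, measure_biUnion_finset ?_ (fun e _ => measurableSet_cylAux s r _)]
        · have hval : ∀ e ∈ (hfin w).toFinset,
              μ (cyl s r (Fin.cons e f)) = xi (r (f (Fin.last n))) / lam ^ (n + 2) := by
            intro e he
            rw [hμ (n + 1) (Fin.cons e f)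
              (compat_cons s r f hf e ((hfin w).mem_toFinset.mp he)), cons_last]
          have hcard : (((hfin w).toFinset.card : ℕ) : ℝ≥0∞) = lam := by
            rw [← Set.ncard_eq_toFinset_card _ (hfin w)]
            exact hrow w
          rw [Finset.sum_congr rfl hval, Finset.sum_const, nsmul_eq_mul, hcard, hμ n f hf]
          have hp : lam ^ (n + 2) = lam * lam ^ (n + 1) := by ring
          rw [hp, ← mul_div_assoc,
            ENNReal.mul_div_mul_left _ _ hlam.ne' hlam']
        · intro e _ e' _ hee'
          refine Set.disjoint_left.mpr fun x hx hx' => hee' ?_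
          have h1 : x.1 0 = e := by simpa using hx 0
          have h2 : x.1 0 = e' := by simpa using hx' 0
          rw [← h1, ← h2]
      obtain ⟨g, hg⟩ := exists_surjective_nat E
      have hext : ν = μ := by
        refine Measure.ext_of_generateFrom_of_iUnion (cylSys s r)
          (fun n => cyl s r (fun _ : Fin 1 => g n)) (generate_cylSys s r)
          (isPiSystem_cylSys s r) ?_ ?_ ?_ key
        · ext x
          simp only [Set.mem_iUnion, Set.mem_univ, iff_true]
          obtain ⟨n, hn⟩ := hg (x.1 0)
          refine ⟨n, fun i => ?_⟩
          have h0 : i.1 = 0 := by omega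
          rw [h0, hn]
        · intro n
          exact ⟨0, fun _ : Fin 1 => g n, fun i => i.elim0, rfl⟩
        · intro n
          rw [key _ ⟨0, fun _ : Fin 1 => g n, fun i => i.elim0, rfl⟩, hsingle]
          exact (ENNReal.div_lt_top (hxi' _) hlam.ne').ne
      intro S hS
      rw [← Measure.map_apply hσ hS, ← hν, hext]
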